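/- For each node i, the time-average expected Age of Information h_i = 1 / (p_i · ∏_{j≠i} (1 - p_j/(1 + d_{ij}))) is a convex function of the vector of transmission probabilities p ∈ (0,1]^N, for fixed positive constants d_{ij}. -/

import Mathlib

/-!
Each factor of the product is a positive affine function of `p`, and the reciprocal of a product
of positive numbers is `exp (∑ -log xₖ)`: a monotone convex function of a sum of convex functions
of `x`, hence convex. Convexity survives precomposition with an affine map.
-/

open Finset

theorem ConvexOn.exp {E : Type*} [AddCommMonoid E] [Module ℝ E] {s : Set E} {f : E → ℝ}
    (hf : ConvexOn ℝ s f) : ConvexOn ℝ s fun x => Real.exp (f x) := by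
  refine ⟨hf.1, fun x hx y hy a b ha hb hab => ?_⟩
  calc Real.exp (f (a • x + b • y)) ≤ Real.exp (a • f x + b • f y) :=
        Real.exp_le_exp.2 (hf.2 hx hy ha hb hab)
    _ ≤ a • Real.exp (f x) + b • Real.exp (f y) :=
        convexOn_exp.2 (Set.mem_univ _) (Set.mem_univ _) ha hb hab

theorem ConvexOn.finset_sum {ι E : Type*} [AddCommMonoid E] [Module ℝ E] {S : Set E}
    (hS : Convex ℝ S) (s : Finset ι) {f : ι → E → ℝ} (hf : ∀ k ∈ s, ConvexOn ℝ S (f k)) :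
    ConvexOn ℝ S fun x => ∑ k ∈ s, f k x := by
  have h := Finset.sum_induction f (ConvexOn ℝ S) (fun _ _ => ConvexOn.add)
    (convexOn_const 0 hS) hf
  simpa only [Finset.sum_fn] using h

theorem convexOn_inv_prod {ι : Type*} (s : Finset ι) :
    ConvexOn ℝ ((s : Set ι).pi fun _ => Set.Ioi 0) fun x : ι → ℝ => (∏ k ∈ s, x k)⁻¹ := by
  have hS : Convex ℝ ((s : Set ι).pi fun _ => Set.Ioi (0 : ℝ)) :=
    convex_pi fun _ _ => convex_Ioi 0
  have hlog : ConvexOn ℝ ((s : Set ι).pi fun _ => Set.Ioi 0)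
      fun x : ι → ℝ => ∑ k ∈ s, -Real.log (x k) :=
    ConvexOn.finset_sum hS s fun k hk =>
      (strictConcaveOn_log_Ioi.concaveOn.neg.comp_linearMap
        (LinearMap.proj (R := ℝ) (φ := fun _ : ι => ℝ) k)).subset
          (fun x (hx : x ∈ (s : Set ι).pi _) => hx k hk) hS
  refine hlog.exp.congr fun x hx => ?_
  simp only [Real.exp_sum, Real.exp_neg, ← Finset.prod_inv_distrib]
  exact Finset.prod_congr rfl fun k hk => by rw [Real.exp_log (hx k hk)]

theorem convexOn_inv_prod_affineMap {ι E : Type*} [AddCommGroup E] [Module ℝ E] (s : Finset ι)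
    (g : ι → E →ᵃ[ℝ] ℝ) :
    ConvexOn ℝ {x | ∀ k ∈ s, 0 < g k x} fun x => (∏ k ∈ s, g k x)⁻¹ := by
  simpa [Set.preimage, Set.mem_pi, Function.comp_def] using
    (convexOn_inv_prod s).comp_affineMap (AffineMap.pi g)

/-- The time-average expected AoI
`h_i(p) = 1 / (p_i · ∏_{j≠i} (1 - p_j/(1 + d_{ij})))`
is a convex function of `p` on `(0,1]^N`, for fixed positive constants `d i j`. -/
theorem aoi_convex (N : ℕ) (i : Fin N) (d : Fin N → Fin N → ℝ)
    (hd : ∀ i j, 0 < d i j) :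
    ConvexOn ℝ {p : Fin N → ℝ | ∀ k, p k ∈ Set.Ioc (0 : ℝ) 1}
      (fun p : Fin N → ℝ =>
        (p i * ∏ j ∈ Finset.univ.erase i, (1 - p j / (1 + d i j)))⁻¹) := by
  let g : Fin N → (Fin N → ℝ) →ᵃ[ℝ] ℝ := fun j =>
    if j = i then AffineMap.proj i else AffineMap.const ℝ _ 1 - (1 + d i j)⁻¹ • AffineMap.proj j
  have hg_self (p : Fin N → ℝ) : g i p = p i := by simp [g]
  have hg_ne (p : Fin N → ℝ) {j : Fin N} (hj : j ≠ i) : g j p = 1 - p j / (1 + d i j) := by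
    simp [g, hj, div_eq_inv_mul]
  have hcube : Convex ℝ {p : Fin N → ℝ | ∀ k, p k ∈ Set.Ioc (0 : ℝ) 1} :=
    fun x hx y hy a b ha hb hab k => convex_Ioc 0 1 (hx k) (hy k) ha hb hab
  have hg_pos : {p : Fin N → ℝ | ∀ k, p k ∈ Set.Ioc (0 : ℝ) 1} ⊆ {p | ∀ j ∈ univ, 0 < g j p} := by
    intro p hp j _
    obtain ⟨hp_pos, hp_le⟩ := hp j
    rcases eq_or_ne j i with rfl | hj
    · rwa [hg_self]
    · have hd_pos := hd i j
      rw [hg_ne p hj, sub_pos, div_lt_one (by linarith)]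
      linarith
  refine ((convexOn_inv_prod_affineMap univ g).subset hg_pos hcube).congr fun p _ => ?_
  dsimp only
  rw [← mul_prod_erase univ _ (mem_univ i), hg_self,
    prod_congr rfl fun j hj => hg_ne p (ne_of_mem_erase hj)]
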